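/- If in a configuration K' of a 3-RPR manipulator two legs degenerate to points, i.e., k'_i = k'_{i+3} for two distinct indices i ∈ {1,2,3}, then K' is a singular point of the singularity variety V = 0: V and all its first partial derivatives with respect to the twelve coordinates vanish at K'. -/
import Mathlib


/-- The 2×2 determinant of the matrix with columns `a`, `b`. -/
def det2 (a b : Fin 2 → ℝ) : ℝ := a 0 * b 1 - a 1 * b 0

/-- The matrix `V(K')` whose columns are the Plücker coordinates of the three legs. -/
def Vmat (K : Fin 6 → Fin 2 → ℝ) : Matrix (Fin 3) (Fin 3) ℝ :=
  Matrix.of fun r c =>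
    let i : Fin 6 := Fin.castLE (by norm_num) c
    let j : Fin 6 := c.addNat 3
    if r = 0 then (K j - K i) 0
    else if r = 1 then (K j - K i) 1
    else det2 (K i) (K j - K i)

/-- The singularity polynomial `V` as a function of the configuration. -/
def Vdet (K : Fin 6 → Fin 2 → ℝ) : ℝ := (Vmat K).det

noncomputable def detCM : ContinuousMultilinearMap ℝ (fun _ : Fin 3 => (Fin 3 → ℝ)) ℝ :=
  { (Matrix.detRowAlternating : (Fin 3 → ℝ) [⋀^Fin 3]→ₗ[ℝ] ℝ).toMultilinearMap with
    cont := by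
      have : Continuous fun M : Matrix (Fin 3) (Fin 3) ℝ => M.det :=
        Continuous.matrix_det continuous_id
      exact this }

lemma detCM_apply (m : Fin 3 → Fin 3 → ℝ) : detCM m = (Matrix.of m).det := rfl

def Cmap (K : Fin 6 → Fin 2 → ℝ) : Fin 3 → Fin 3 → ℝ :=
  fun c r => Vmat K r c

lemma Vdet_eq (K : Fin 6 → Fin 2 → ℝ) : Vdet K = detCM (Cmap K) := by
  rw [detCM_apply]
  have h : Matrix.of (Cmap K) = (Vmat K).transpose := rfl
  rw [h, Matrix.det_transpose]
  rfl

lemma Cmap_diff (K : Fin 6 → Fin 2 → ℝ) : DifferentiableAt ℝ Cmap K := by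
  rw [differentiableAt_pi]
  intro c
  rw [differentiableAt_pi]
  intro r
  fin_cases r <;>
    simp only [Cmap, Vmat, Matrix.of_apply, det2, Pi.sub_apply] <;>
    norm_num [Fin.ext_iff] <;>
    fun_prop

lemma Cmap_col_zero (K : Fin 6 → Fin 2 → ℝ) (i : Fin 3)
    (h : K (Fin.castLE (by norm_num) i) = K (i.addNat 3)) : Cmap K i = 0 := by
  funext r
  fin_cases r <;>
    simp [Cmap, Vmat, det2, h]

/-- If two legs degenerate to points, then the configuration is a singular point of the
singularity variety `V = 0`. -/
theorem two_degenerate_legs_singular_point (K : Fin 6 → Fin 2 → ℝ)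
    (h : ∃ i j : Fin 3, i ≠ j ∧
      K (Fin.castLE (by norm_num) i) = K (i.addNat 3) ∧
      K (Fin.castLE (by norm_num) j) = K (j.addNat 3)) :
    Vdet K = 0 ∧ fderiv ℝ Vdet K = 0 := by
  obtain ⟨i, j, hij, hi, hj⟩ := h
  have hCi : Cmap K i = 0 := Cmap_col_zero K i hi
  have hCj : Cmap K j = 0 := Cmap_col_zero K j hj
  have hlin : detCM.linearDeriv (Cmap K) = 0 := by
    ext y
    rw [ContinuousMultilinearMap.linearDeriv_apply]
    simp only [ContinuousLinearMap.zero_apply]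
    refine Finset.sum_eq_zero fun s _ => ?_
    rcases eq_or_ne s i with rfl | hs
    · exact detCM.map_coord_zero j (by rw [Function.update_of_ne (Ne.symm hij), hCj])
    · exact detCM.map_coord_zero i (by rw [Function.update_of_ne (Ne.symm hs), hCi])
  have hd : HasFDerivAt Vdet (0 : (Fin 6 → Fin 2 → ℝ) →L[ℝ] ℝ) K := by
    have h1 : HasFDerivAt (⇑detCM) (detCM.linearDeriv (Cmap K)) (Cmap K) :=
      detCM.hasFDerivAt (Cmap K)
    have h3 := h1.comp K (Cmap_diff K).hasFDerivAt
    have hfun : Vdet = detCM ∘ Cmap := funext Vdet_eq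
    rw [hfun]
    simpa [hlin] using h3
  refine ⟨?_, hd.fderiv⟩
  rw [Vdet_eq]
  exact detCM.toMultilinearMap.map_coord_zero i hCi
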